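/- For all integers n ≥ 1, the coefficient sequence of the polynomial 3(1+x)^n + (1+x)^{n-1} - 2nx - 3 is log-concave, i.e., if a_i denotes the coefficient of x^i, then a_i^2 ≥ a_{i-1}·a_{i+1} for all i ≥ 1. -/
import Mathlib

open Polynomial

lemma cross_choose (n m j : ℕ) (hm : m ≤ n + 1) :
    n.choose j * m.choose (j + 2) ≤ n.choose (j + 1) * m.choose (j + 1) := by
  have h1 := Nat.choose_succ_right_eq n j
  have h2 := Nat.choose_succ_right_eq m j
  have h3 := Nat.choose_succ_right_eq m (j + 1)
  have key : m - (j + 1) ≤ n - j := by omega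
  refine Nat.le_of_mul_le_mul_right ?_ (show 0 < (j + 1) * (j + 1) * (j + 2) by positivity)
  calc n.choose j * m.choose (j + 2) * ((j + 1) * (j + 1) * (j + 2))
      = n.choose j * (m.choose (j + 1 + 1) * (j + 1 + 1)) * ((j + 1) * (j + 1)) := by ring
    _ = n.choose j * (m.choose (j + 1) * (m - (j + 1))) * ((j + 1) * (j + 1)) := by rw [h3]
    _ = n.choose j * (m.choose (j + 1) * (j + 1)) * ((m - (j + 1)) * (j + 1)) := by ring
    _ = n.choose j * (m.choose j * (m - j)) * ((m - (j + 1)) * (j + 1)) := by rw [h2]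
    _ = n.choose j * m.choose j * (m - j) * ((m - (j + 1)) * (j + 1)) := by ring
    _ ≤ n.choose j * m.choose j * (m - j) * ((n - j) * (j + 2)) :=
        Nat.mul_le_mul_left _ (Nat.mul_le_mul key (by omega))
    _ = (n.choose j * (n - j)) * (m.choose j * (m - j)) * (j + 2) := by ring
    _ = (n.choose (j + 1) * (j + 1)) * (m.choose (j + 1) * (j + 1)) * (j + 2) := by rw [h1, h2]
    _ = n.choose (j + 1) * m.choose (j + 1) * ((j + 1) * (j + 1) * (j + 2)) := by ring

lemma bLC (n j : ℕ) :
    (3 * n.choose j + (n - 1).choose j) * (3 * n.choose (j + 2) + (n - 1).choose (j + 2)) ≤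
      (3 * n.choose (j + 1) + (n - 1).choose (j + 1)) ^ 2 := by
  have L1 := cross_choose n n j (by omega)
  have L1' := cross_choose (n - 1) (n - 1) j (by omega)
  have L2 := cross_choose n (n - 1) j (by omega)
  have L3 := cross_choose (n - 1) n j (by omega)
  nlinarith [L1, L1', L2, L3]

lemma coeffP (n k : ℕ) :
    (3 * (1 + X) ^ n + (1 + X) ^ (n - 1) - 2 * (n : Polynomial ℤ) * X - 3).coeff k =
      3 * (n.choose k : ℤ) + ((n - 1).choose k : ℤ)
        - (if k = 1 then 2 * (n : ℤ) else 0) - (if k = 0 then 3 else 0) := by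
  have h2 : (2 * (n : Polynomial ℤ) * X) = C (2 * (n : ℤ)) * X := by rw [map_mul]; simp
  have h3 : (3 : Polynomial ℤ) = C 3 := by norm_num
  simp only [h2, h3, coeff_sub, coeff_add, coeff_C_mul, coeff_X, coeff_C,
    coeff_one_add_X_pow, mul_ite, mul_one, mul_zero]
  split_ifs <;> omega

lemma coeffP2 (n k : ℕ) (hk : 2 ≤ k) :
    (3 * (1 + X) ^ n + (1 + X) ^ (n - 1) - 2 * (n : Polynomial ℤ) * X - 3).coeff k =
      ((3 * n.choose k + (n - 1).choose k : ℕ) : ℤ) := by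
  rw [coeffP, if_neg (by omega), if_neg (by omega)]; push_cast; ring

lemma b2_le (n : ℕ) (hn : 1 ≤ n) :
    3 * n.choose 2 + (n - 1).choose 2 ≤ (2 * n - 1) * (2 * n - 1) := by
  obtain _ | _ | k := n
  · omega
  · decide
  · have h1 := Nat.choose_succ_right_eq (k + 2) 1
    have h2 := Nat.choose_succ_right_eq (k + 1) 1
    simp [Nat.choose_one_right] at h1 h2
    refine Nat.le_of_mul_le_mul_right ?_ (show 0 < 2 by norm_num)
    have e1 : k + 1 + 1 - 1 = k + 1 := rfl
    have e2 : 2 * (k + 1 + 1) - 1 = 2 * k + 3 := by omega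
    rw [e1, e2]
    nlinarith [h1, h2]

theorem stmt_5 (n : ℕ) (hn : 1 ≤ n) (i : ℕ) (hi : 1 ≤ i) :
    ((3 * (1 + X) ^ n + (1 + X) ^ (n - 1) - 2 * (n : Polynomial ℤ) * X - 3).coeff i) ^ 2 ≥
      (3 * (1 + X) ^ n + (1 + X) ^ (n - 1) - 2 * (n : Polynomial ℤ) * X - 3).coeff (i - 1) *
      (3 * (1 + X) ^ n + (1 + X) ^ (n - 1) - 2 * (n : Polynomial ℤ) * X - 3).coeff (i + 1) := by
  have hc1 : (3 * (1 + X) ^ n + (1 + X) ^ (n - 1) - 2 * (n : Polynomial ℤ) * X - 3).coeff 1 =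
      ((2 * n - 1 : ℕ) : ℤ) := by
    rw [coeffP, if_pos rfl, if_neg (by omega)]
    simp [Nat.choose_one_right]
    omega
  obtain _ | _ | _ | j := i
  · omega
  · -- i = 1
    show _ ^ 2 ≥ _ * (3 * (1 + X) ^ n + (1 + X) ^ (n - 1) - 2 * (n : Polynomial ℤ) * X - 3).coeff 2
    have hc0 : (3 * (1 + X) ^ n + (1 + X) ^ (n - 1) - 2 * (n : Polynomial ℤ) * X - 3).coeff 0
        = 1 := by
      rw [coeffP, if_neg (by omega), if_pos rfl]; simp
    rw [hc1, hc0, coeffP2 n 2 (by norm_num), one_mul]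
    have := b2_le n hn
    calc ((3 * n.choose 2 + (n - 1).choose 2 : ℕ) : ℤ)
        ≤ (((2 * n - 1) * (2 * n - 1) : ℕ) : ℤ) := by exact_mod_cast this
      _ = ((2 * n - 1 : ℕ) : ℤ) ^ 2 := by push_cast; ring
  · -- i = 2
    show _ ^ 2 ≥ _ * _
    rw [coeffP2 n 2 (by norm_num), coeffP2 n 3 (by norm_num)]
    show _ ≥ (3 * (1 + X) ^ n + (1 + X) ^ (n - 1) - 2 * (n : Polynomial ℤ) * X - 3).coeff 1 * _
    rw [hc1]
    have key : (2 * n - 1) * (3 * n.choose 3 + (n - 1).choose 3) ≤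
        (3 * n.choose 2 + (n - 1).choose 2) ^ 2 := by
      have h1 := bLC n 1
      have h2 : 2 * n - 1 ≤ 3 * n.choose 1 + (n - 1).choose 1 := by
        simp [Nat.choose_one_right]; omega
      calc (2 * n - 1) * (3 * n.choose 3 + (n - 1).choose 3)
          ≤ (3 * n.choose 1 + (n - 1).choose 1) * (3 * n.choose 3 + (n - 1).choose 3) :=
            Nat.mul_le_mul_right _ h2
        _ ≤ _ := h1
    exact_mod_cast key
  · -- i = j + 3
    rw [coeffP2 n (j + 3) (by omega), coeffP2 n (j + 3 - 1) (by omega),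
      coeffP2 n (j + 3 + 1) (by omega)]
    have : j + 3 - 1 = j + 2 := rfl
    rw [this]
    exact_mod_cast bLC n (j + 2)
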